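/- arXiv:0909.0216 — 6 statements merged into one kernel-verified Lean document; each statement's English description precedes it below -/
import Mathlib

section
/- Let Φ : ℝ → ℝ be differentiable, and let r_L, v_L, r_R, v_R, c be real numbers with r_L ≠ r_R. If the three jump conditions c(r_L − r_R) + (v_L − v_R) = 0, c(v_L − v_R) + (Φ'(r_L) − Φ'(r_R)) = 0, and c(½v_L² + Φ(r_L) − ½v_R² − Φ(r_R)) + (v_L Φ'(r_L) − v_R Φ'(r_R)) = 0 all hold, and c ≠ 0, then J(r_L, r_R) = 0. -/
noncomputable def consJ (Φ : ℝ → ℝ) (a b : ℝ) : ℝ :=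
  Φ a - Φ b - ((a - b) / 2) * (deriv Φ a + deriv Φ b)

theorem stmt0_general (Φ : ℝ → ℝ)
    (rL vL rR vR c : ℝ)
    (hmass : c * (rL - rR) + (vL - vR) = 0)
    (hmom : c * (vL - vR) + (deriv Φ rL - deriv Φ rR) = 0)
    (hen : c * ((1 / 2) * vL ^ 2 + Φ rL - (1 / 2) * vR ^ 2 - Φ rR)
        + (vL * deriv Φ rL - vR * deriv Φ rR) = 0)
    (hc : c ≠ 0) :
    consJ Φ rL rR = 0 := by
  -- Subtracting the momentum and mass conditions with weights the averages of v and of Φ'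
  -- removes the velocities from the energy condition and leaves exactly c · J(r_L, r_R).
  have hcJ : c * consJ Φ rL rR = 0 := by
    unfold consJ
    linear_combination hen - ((vL + vR) / 2) * hmom - ((deriv Φ rL + deriv Φ rR) / 2) * hmass
  exact (mul_eq_zero.mp hcJ).resolve_left hc

theorem stmt0 (Φ : ℝ → ℝ) (hΦ : Differentiable ℝ Φ)
    (rL vL rR vR c : ℝ) (hr : rL ≠ rR)
    (hmass : c * (rL - rR) + (vL - vR) = 0)
    (hmom : c * (vL - vR) + (deriv Φ rL - deriv Φ rR) = 0)
    (hen : c * ((1 / 2) * vL ^ 2 + Φ rL - (1 / 2) * vR ^ 2 - Φ rR)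
        + (vL * deriv Φ rL - vR * deriv Φ rR) = 0)
    (hc : c ≠ 0) :
    consJ Φ rL rR = 0 :=
  stmt0_general Φ rL vL rR vR c hmass hmom hen hc
end

section
/- Let Φ : ℝ → ℝ be three times continuously differentiable and let r_L ≠ r_R be real numbers such that Φ''(r) > 0 for all r in the closed interval between r_R and r_L and Φ'''(r) ≠ 0 for all r in the open interval between r_R and r_L. If real numbers v_L, v_R, c satisfy the Rankine–Hugoniot jump conditions for mass and momentum, c(r_L − r_R) + (v_L − v_R) = 0 and c(v_L − v_R) + (Φ'(r_L) − Φ'(r_R)) = 0, then the jump condition for the energy is violated: c(½v_L² + Φ(r_L) − ½v_R² − Φ(r_R)) + (v_L Φ'(r_L) − v_R Φ'(r_R)) ≠ 0. -/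
/-!
Eliminating `v_L - v_R = -c (r_L - r_R)` and `Φ'(r_L) - Φ'(r_R) = c² (r_L - r_R)` from the energy
production leaves `c` times the error of the trapezoidal rule for `∫ Φ'` between `r_R` and `r_L`.
Here `c ≠ 0`, because `Φ'` is injective on the interval (`Φ'' > 0`), and the trapezoidal error
vanishes only if `Φ'''` does somewhere in between, by applying Rolle's theorem twice.
-/

open Set

theorem ContDiff.hasDerivAt_iteratedDeriv {f : ℝ → ℝ} {n : WithTop ℕ∞} {m : ℕ}
    (hf : ContDiff ℝ n f) (hm : m < n) (x : ℝ) :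
    HasDerivAt (iteratedDeriv m f) (iteratedDeriv (m + 1) f x) x := by
  rw [iteratedDeriv_succ]
  exact (hf.differentiable_iteratedDeriv m hm x).hasDerivAt

theorem rankineHugoniot_energy_eq {c rL rR vL vR PL PR pL pR : ℝ}
    (hmass : c * (rL - rR) + (vL - vR) = 0) (hmom : c * (vL - vR) + (pL - pR) = 0) :
    c * ((1 / 2) * vL ^ 2 + PL - (1 / 2) * vR ^ 2 - PR) + (vL * pL - vR * pR)
      = c * (PL - PR - (rL - rR) / 2 * (pR + pL)) := by
  linear_combination (vL + vR) / 2 * hmom + (pL + pR) / 2 * hmass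

section Trapezoid

variable {F f f' f'' : ℝ → ℝ} {a b : ℝ}

theorem trapezoid_error_ne_zero_of_lt (hab : a < b)
    (hF : ∀ x ∈ Icc a b, HasDerivAt F (f x) x) (hf : ∀ x ∈ Icc a b, HasDerivAt f (f' x) x)
    (hf' : ∀ x ∈ Icc a b, HasDerivAt f' (f'' x) x) (hf'' : ∀ x ∈ Ioo a b, f'' x ≠ 0) :
    F b - F a - (b - a) / 2 * (f a + f b) ≠ 0 := by
  intro hb
  set g : ℝ → ℝ := fun x ↦ F x - F a - (x - a) / 2 * (f a + f x)
  set h : ℝ → ℝ := fun x ↦ f x - f a - (x - a) * f' x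
  have hg : ∀ x ∈ Icc a b, HasDerivAt g (h x / 2) x := fun x hx ↦
    (((hF x hx).sub_const (F a)).sub ((((hasDerivAt_id x).sub_const a).div_const 2).mul
      ((hf x hx).const_add (f a)))).congr_deriv (by simp only [h, id]; ring)
  have hh : ∀ x ∈ Icc a b, HasDerivAt h (-((x - a) * f'' x)) x := fun x hx ↦
    (((hf x hx).sub_const (f a)).sub (((hasDerivAt_id x).sub_const a).mul
      (hf' x hx))).congr_deriv (by simp only [id]; ring)
  obtain ⟨x, hx, hgx⟩ := exists_hasDerivAt_eq_zero hab
    (fun y hy ↦ (hg y hy).continuousAt.continuousWithinAt) (by simp [g, hb])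
    (fun y hy ↦ hg y (Ioo_subset_Icc_self hy))
  have hxb : Icc a x ⊆ Icc a b := Icc_subset_Icc_right hx.2.le
  obtain ⟨y, hy, hhy⟩ := exists_hasDerivAt_eq_zero hx.1
    (fun z hz ↦ (hh z (hxb hz)).continuousAt.continuousWithinAt)
    (by simp only [h, sub_self, zero_mul]; linarith)
    (fun z hz ↦ hh z (hxb (Ioo_subset_Icc_self hz)))
  exact hf'' y ⟨hy.1, hy.2.trans hx.2⟩
    ((mul_eq_zero.1 (neg_eq_zero.1 hhy)).resolve_left (sub_ne_zero.2 hy.1.ne'))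

theorem trapezoid_error_ne_zero (hab : a ≠ b)
    (hF : ∀ x ∈ uIcc a b, HasDerivAt F (f x) x) (hf : ∀ x ∈ uIcc a b, HasDerivAt f (f' x) x)
    (hf' : ∀ x ∈ uIcc a b, HasDerivAt f' (f'' x) x) (hf'' : ∀ x ∈ uIoo a b, f'' x ≠ 0) :
    F b - F a - (b - a) / 2 * (f a + f b) ≠ 0 := by
  wlog hlt : a < b generalizing a b
  · have := this hab.symm (uIcc_comm a b ▸ hF) (uIcc_comm a b ▸ hf) (uIcc_comm a b ▸ hf')
      (uIoo_comm a b ▸ hf'') (lt_of_le_of_ne (not_lt.1 hlt) hab.symm)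
    contrapose! this
    linear_combination -this
  rw [uIcc_of_lt hlt] at hF hf hf'
  rw [uIoo_of_lt hlt] at hf''
  exact trapezoid_error_ne_zero_of_lt hlt hF hf hf' hf''

end Trapezoid

theorem stmt4 (Φ : ℝ → ℝ) (hΦ : ContDiff ℝ 3 Φ) (rL rR : ℝ) (hne : rL ≠ rR)
    (hconv : ∀ r ∈ Set.Icc (min rR rL) (max rR rL), 0 < iteratedDeriv 2 Φ r)
    (hgen : ∀ r ∈ Set.Ioo (min rR rL) (max rR rL), iteratedDeriv 3 Φ r ≠ 0)
    (vL vR c : ℝ)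
    (hmass : c * (rL - rR) + (vL - vR) = 0)
    (hmom : c * (vL - vR) + (deriv Φ rL - deriv Φ rR) = 0) :
    c * ((1 / 2) * vL ^ 2 + Φ rL - (1 / 2) * vR ^ 2 - Φ rR)
      + (vL * deriv Φ rL - vR * deriv Φ rR) ≠ 0 := by
  have hΦ₀ (x : ℝ) : HasDerivAt Φ (deriv Φ x) x := by
    simpa using hΦ.hasDerivAt_iteratedDeriv (m := 0) (by norm_num) x
  have hΦ₁ (x : ℝ) : HasDerivAt (deriv Φ) (iteratedDeriv 2 Φ x) x := by
    simpa using hΦ.hasDerivAt_iteratedDeriv (m := 1) (by norm_num) x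
  have hΦ₂ (x : ℝ) : HasDerivAt (iteratedDeriv 2 Φ) (iteratedDeriv 3 Φ x) x :=
    hΦ.hasDerivAt_iteratedDeriv (by norm_num) x
  have hmono : StrictMonoOn (deriv Φ) (uIcc rR rL) :=
    strictMonoOn_of_hasDerivWithinAt_pos (convex_uIcc rR rL)
      (fun x _ ↦ (hΦ₁ x).continuousAt.continuousWithinAt)
      (fun x _ ↦ (hΦ₁ x).hasDerivWithinAt)
      (fun x hx ↦ hconv x (interior_subset hx))
  have hc : c ≠ 0 := by
    rintro rfl
    exact hne (hmono.injOn right_mem_uIcc left_mem_uIcc (by linarith))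
  rw [rankineHugoniot_energy_eq hmass hmom]
  exact mul_ne_zero hc (trapezoid_error_ne_zero hne.symm (fun x _ ↦ hΦ₀ x) (fun x _ ↦ hΦ₁ x)
    (fun x _ ↦ hΦ₂ x) hgen)
end

section
/- Let Φ : ℝ → ℝ be three times continuously differentiable, let I ⊆ ℝ be an interval and r* ∈ I a point such that Φ'''(r) > 0 for all r ∈ I with r < r* and Φ'''(r) < 0 for all r ∈ I with r > r* (or with both signs reversed). Then for every a ∈ I there is at most one b ∈ I with b ≠ a and J(a,b) = 0; that is, if b, b' ∈ I satisfy b ≠ a, b' ≠ a, J(a,b) = 0 and J(a,b') = 0, then b = b'. -/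
open Set

section Rolle

variable {f : ℝ → ℝ} {I : Set ℝ}

lemma Set.OrdConnected.exists_deriv_eq_zero_pair (hI : I.OrdConnected) (hf : ContinuousOn f I)
    {p q r : ℝ} (hp : p ∈ I) (hr : r ∈ I) (hpq : p < q) (hqr : q < r)
    (hfpq : f p = f q) (hfqr : f q = f r) :
    ∃ c d, c ∈ I ∧ d ∈ I ∧ p < c ∧ c < q ∧ q < d ∧ d < r ∧ deriv f c = 0 ∧ deriv f d = 0 := by
  have hIcc : Icc p r ⊆ I := hI.out hp hr
  obtain ⟨c, hc, hc0⟩ := exists_deriv_eq_zero hpq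
    (hf.mono ((Icc_subset_Icc_right hqr.le).trans hIcc)) hfpq
  obtain ⟨d, hd, hd0⟩ := exists_deriv_eq_zero hqr
    (hf.mono ((Icc_subset_Icc_left hpq.le).trans hIcc)) hfqr
  exact ⟨c, d, hIcc ⟨hc.1.le, (hc.2.trans hqr).le⟩, hIcc ⟨(hpq.trans hd.1).le, hd.2.le⟩,
    hc.1, hc.2, hd.1, hd.2, hc0, hd0⟩

lemma Set.OrdConnected.subsingleton_zeros_of_deriv (hI : I.OrdConnected) (hf : ContinuousOn f I)
    {a : ℝ} (ha : a ∈ I) (hfa : f a = 0)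
    (hderiv : {x ∈ I | x ≠ a ∧ deriv f x = 0}.Subsingleton) :
    {x ∈ I | x ≠ a ∧ f x = 0}.Subsingleton := by
  have key : ∀ {p q r}, p ∈ I → r ∈ I → p < q → q < r → f p = 0 → f q = 0 → f r = 0 →
      a = p ∨ a = q ∨ a = r → False := by
    intro p q r hp hr hpq hqr hfp hfq hfr hapqr
    obtain ⟨c, d, hc, hd, hpc, hcq, hqd, hdr, hc0, hd0⟩ :=
      hI.exists_deriv_eq_zero_pair hf hp hr hpq hqr (hfp.trans hfq.symm) (hfq.trans hfr.symm)
    have hca : c ≠ a := by rcases hapqr with rfl | rfl | rfl <;> linarith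
    have hda : d ≠ a := by rcases hapqr with rfl | rfl | rfl <;> linarith
    have hcd : c = d := hderiv ⟨hc, hca, hc0⟩ ⟨hd, hda, hd0⟩
    linarith
  intro b ⟨hb, hba, hfb⟩ b' ⟨hb', hb'a, hfb'⟩
  by_contra hbb'
  wlog hlt : b < b' generalizing b b'
  · exact this hb' hb'a hfb' hb hba hfb (Ne.symm hbb') ((not_lt.mp hlt).lt_of_ne (Ne.symm hbb'))
  rcases lt_or_gt_of_ne hba with hab | hab
  · rcases lt_or_gt_of_ne hb'a with hab' | hab'
    · exact key hb ha hlt hab' hfb hfb' hfa (by tauto)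
    · exact key hb hb' hab hab' hfb hfa hfb' (by tauto)
  · exact key ha hb' hab hlt hfa hfb hfb' (by tauto)

end Rolle

noncomputable def tangentGap (φ : ℝ → ℝ) (a y : ℝ) : ℝ :=
  φ a - φ y - (a - y) * deriv φ y

@[simp]
lemma tangentGap_self (φ : ℝ → ℝ) (a : ℝ) : tangentGap φ a a = 0 := by
  simp [tangentGap]

lemma hasDerivAt_tangentGap {φ : ℝ → ℝ} {a y : ℝ} (hφ : DifferentiableAt ℝ φ y)
    (hφ' : DifferentiableAt ℝ (deriv φ) y) :
    HasDerivAt (tangentGap φ a) ((y - a) * deriv (deriv φ) y) y := by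
  have : HasDerivAt (fun x ↦ φ a - φ x - (a - x) * deriv φ x)
      (-deriv φ y - (-1 * deriv φ y + (a - y) * deriv (deriv φ) y)) y :=
    (hφ.hasDerivAt.const_sub (φ a)).sub (((hasDerivAt_id' y).const_sub a).mul hφ'.hasDerivAt)
  exact this.congr_deriv (by ring)

@[simp]
lemma consJ_self (Φ : ℝ → ℝ) (a : ℝ) : consJ Φ a a = 0 := by
  simp [consJ]

lemma hasDerivAt_consJ_right {Φ : ℝ → ℝ} {a y : ℝ} (hΦ : DifferentiableAt ℝ Φ y)
    (hΦ' : DifferentiableAt ℝ (deriv Φ) y) :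
    HasDerivAt (consJ Φ a) (tangentGap (deriv Φ) a y / 2) y := by
  have : HasDerivAt (fun x ↦ Φ a - Φ x - ((a - x) / 2) * (deriv Φ a + deriv Φ x))
      (-deriv Φ y - ((-1 / 2) * (deriv Φ a + deriv Φ y) + ((a - y) / 2) * deriv (deriv Φ) y)) y :=
    (hΦ.hasDerivAt.const_sub (Φ a)).sub
      ((((hasDerivAt_id' y).const_sub a).div_const 2).mul (hΦ'.hasDerivAt.const_add (deriv Φ a)))
  exact this.congr_deriv (by rw [tangentGap]; ring)

lemma eq_of_eq_zero_of_sign_change {F : ℝ → ℝ} {I : Set ℝ} {rs : ℝ}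
    (hturn : ((∀ r ∈ I, r < rs → 0 < F r) ∧ (∀ r ∈ I, rs < r → F r < 0)) ∨
      ((∀ r ∈ I, r < rs → F r < 0) ∧ (∀ r ∈ I, rs < r → 0 < F r)))
    {x : ℝ} (hx : x ∈ I) (hFx : F x = 0) : x = rs := by
  by_contra hne
  rcases lt_or_gt_of_ne hne with hlt | hgt <;>
    rcases hturn with ⟨hl, hr⟩ | ⟨hl, hr⟩
  all_goals first
    | have := hl x hx hlt; linarith
    | have := hr x hx hgt; linarith

theorem stmt5_general (Φ : ℝ → ℝ) (hΦ : ContDiff ℝ 3 Φ)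
    (I : Set ℝ) (hI : I.OrdConnected) (rs : ℝ)
    (hturn :
      ((∀ r ∈ I, r < rs → 0 < iteratedDeriv 3 Φ r) ∧
       (∀ r ∈ I, rs < r → iteratedDeriv 3 Φ r < 0)) ∨
      ((∀ r ∈ I, r < rs → iteratedDeriv 3 Φ r < 0) ∧
       (∀ r ∈ I, rs < r → 0 < iteratedDeriv 3 Φ r)))
    (a b b' : ℝ) (ha : a ∈ I) (hb : b ∈ I) (hb' : b' ∈ I)
    (hba : b ≠ a) (hb'a : b' ≠ a)
    (hJ : consJ Φ a b = 0) (hJ' : consJ Φ a b' = 0) :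
    b = b' := by
  have hΦ₁ : Differentiable ℝ Φ := hΦ.differentiable (by norm_num)
  have hΦ₂ : Differentiable ℝ (deriv Φ) := by
    simpa using hΦ.differentiable_iteratedDeriv 1 (by norm_num)
  have hΦ₃ : Differentiable ℝ (deriv (deriv Φ)) := by
    simpa [iteratedDeriv_eq_iterate] using hΦ.differentiable_iteratedDeriv 2 (by norm_num)
  have hgapCont : Continuous (tangentGap (deriv Φ) a) :=
    continuous_iff_continuousAt.2 fun y ↦ (hasDerivAt_tangentGap (hΦ₂ y) (hΦ₃ y)).continuousAt
  have hgap : {x ∈ I | x ≠ a ∧ tangentGap (deriv Φ) a x = 0}.Subsingleton := by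
    refine hI.subsingleton_zeros_of_deriv hgapCont.continuousOn ha (tangentGap_self _ _) ?_
    refine (subsingleton_singleton (a := rs)).anti fun x hx ↦ mem_singleton_iff.2 ?_
    obtain ⟨hx, hxa, hx0⟩ := hx
    rw [(hasDerivAt_tangentGap (hΦ₂ x) (hΦ₃ x)).deriv, mul_eq_zero, sub_eq_zero] at hx0
    refine eq_of_eq_zero_of_sign_change hturn hx ?_
    simpa [iteratedDeriv_eq_iterate] using hx0.resolve_left hxa
  have hJcont : Continuous (consJ Φ a) :=
    continuous_iff_continuousAt.2 fun y ↦ (hasDerivAt_consJ_right (hΦ₁ y) (hΦ₂ y)).continuousAt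
  have hJzeros : {x ∈ I | x ≠ a ∧ consJ Φ a x = 0}.Subsingleton := by
    refine hI.subsingleton_zeros_of_deriv hJcont.continuousOn ha (consJ_self _ _) ?_
    simpa [(hasDerivAt_consJ_right (hΦ₁ _) (hΦ₂ _)).deriv] using hgap
  exact hJzeros ⟨hb, hba, hJ⟩ ⟨hb', hb'a, hJ'⟩

theorem stmt5 (Φ : ℝ → ℝ) (hΦ : ContDiff ℝ 3 Φ)
    (I : Set ℝ) (hI : I.OrdConnected) (rs : ℝ) (hrs : rs ∈ I)
    (hturn :
      ((∀ r ∈ I, r < rs → 0 < iteratedDeriv 3 Φ r) ∧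
       (∀ r ∈ I, rs < r → iteratedDeriv 3 Φ r < 0)) ∨
      ((∀ r ∈ I, r < rs → iteratedDeriv 3 Φ r < 0) ∧
       (∀ r ∈ I, rs < r → 0 < iteratedDeriv 3 Φ r)))
    (a b b' : ℝ) (ha : a ∈ I) (hb : b ∈ I) (hb' : b' ∈ I)
    (hba : b ≠ a) (hb'a : b' ≠ a)
    (hJ : consJ Φ a b = 0) (hJ' : consJ Φ a b' = 0) :
    b = b' :=
  stmt5_general Φ hΦ I hI rs hturn a b b' ha hb hb' hba hb'a hJ hJ'
end

section
/- Let Φ : ℝ → ℝ be three times continuously differentiable, let I ⊆ ℝ be an interval and r* ∈ I a point such that Φ'''(r) > 0 for all r ∈ I with r < r* and Φ'''(r) < 0 for all r ∈ I with r > r* (or with both signs reversed). Then the off-diagonal zero set of J in I × I is the graph of a strictly decreasing function: if (a,b) and (a',b') lie in I × I with a ≠ b, a' ≠ b', J(a,b) = 0, J(a',b') = 0 and a < a', then b > b'. -/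
open Set Filter Topology intervalIntegral

theorem HasDerivAt.eventually_nhdsLT_pos {f : ℝ → ℝ} {f' c : ℝ} (hf : HasDerivAt f f' c)
    (hfc : f c = 0) (hf' : f' < 0) : ∀ᶠ t in 𝓝[<] c, 0 < f t := by
  have hslope := (hasDerivAt_iff_tendsto_slope.mp hf).mono_left (nhdsLT_le_nhdsNE c)
  filter_upwards [hslope.eventually_lt_const hf', self_mem_nhdsWithin] with t ht (htc : t < c)
  rw [slope_def_field, hfc, sub_zero] at ht
  rcases div_neg_iff.mp ht with h | h <;> linarith [h.1, h.2]

theorem HasDerivAt.eventually_nhdsGT_neg {f : ℝ → ℝ} {f' c : ℝ} (hf : HasDerivAt f f' c)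
    (hfc : f c = 0) (hf' : f' < 0) : ∀ᶠ t in 𝓝[>] c, f t < 0 := by
  have hslope := (hasDerivAt_iff_tendsto_slope.mp hf).mono_left (nhdsGT_le_nhdsNE c)
  filter_upwards [hslope.eventually_lt_const hf', self_mem_nhdsWithin] with t ht (htc : c < t)
  rw [slope_def_field, hfc, sub_zero] at ht
  rcases div_neg_iff.mp ht with h | h <;> linarith [h.1, h.2]

theorem pos_of_lt_of_hasDerivAt_neg_at_zeros {f f' : ℝ → ℝ} {x c : ℝ} (hxc : x < c)
    (hf : ∀ t ∈ Icc x c, HasDerivAt f (f' t) t) (hf' : ∀ t ∈ Icc x c, f t = 0 → f' t < 0)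
    (hfc : f c = 0) : 0 < f x := by
  have hcont : ContinuousOn f (Icc x c) := fun t ht => (hf t ht).continuousAt.continuousWithinAt
  have hc : c ∈ Icc x c := right_mem_Icc.mpr hxc.le
  obtain ⟨w, hfw, hxw, hwc⟩ : ∃ w, 0 < f w ∧ w ∈ Ioo x c :=
    ((hf c hc).eventually_nhdsLT_pos hfc (hf' c hc hfc)).and (Ioo_mem_nhdsLT hxc) |>.exists
  by_contra! hfx
  have hxw' : Icc x w ⊆ Icc x c := Icc_subset_Icc_right hwc.le
  -- the last zero `s` of `f` on `[x, w]` is followed by negative values, hence by a later zero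
  have hZ : IsClosed (Icc x w ∩ f ⁻¹' {0}) :=
    (hcont.mono hxw').preimage_isClosed_of_isClosed isClosed_Icc isClosed_singleton
  obtain ⟨z, hz, hfz⟩ := intermediate_value_Icc hxw.le (hcont.mono hxw') ⟨hfx, hfw.le⟩
  obtain ⟨s, ⟨hs, hfs⟩, hmax⟩ :=
    (isCompact_Icc.of_isClosed_subset hZ inter_subset_left).exists_isGreatest ⟨z, hz, hfz⟩
  have hsw : s < w := hs.2.lt_of_ne (by rintro rfl; exact hfw.ne' hfs)
  obtain ⟨v, hfv, hsv, hvw⟩ : ∃ v, f v < 0 ∧ v ∈ Ioo s w :=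
    ((hf s (hxw' hs)).eventually_nhdsGT_neg hfs (hf' s (hxw' hs) hfs)).and
      (Ioo_mem_nhdsGT hsw) |>.exists
  have hvw' : Icc v w ⊆ Icc x w := Icc_subset_Icc_left (hs.1.trans hsv.le)
  obtain ⟨u, hu, hfu⟩ :=
    intermediate_value_Icc hvw.le (hcont.mono (hvw'.trans hxw')) ⟨hfv.le, hfw.le⟩
  linarith [hmax ⟨hvw' hu, hfu⟩, hu.1]

theorem neg_of_lt_of_hasDerivAt_neg_at_zeros {f f' : ℝ → ℝ} {c x : ℝ} (hcx : c < x)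
    (hf : ∀ t ∈ Icc c x, HasDerivAt f (f' t) t) (hf' : ∀ t ∈ Icc c x, f t = 0 → f' t < 0)
    (hfc : f c = 0) : f x < 0 := by
  have hmem {t : ℝ} (ht : t ∈ Icc (-x) (-c)) : -t ∈ Icc c x :=
    ⟨le_neg.mpr ht.2, neg_le.mpr ht.1⟩
  have := pos_of_lt_of_hasDerivAt_neg_at_zeros (f := fun t => -f (-t)) (f' := fun t => f' (-t))
    (neg_lt_neg hcx)
    (fun t ht => ((hf _ (hmem ht)).comp t (hasDerivAt_neg t)).neg.congr_deriv (by ring))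
    (fun t ht h => hf' _ (hmem ht) (neg_eq_zero.mp h)) (by simp [hfc])
  simpa using this

section Taylor

variable {Φ : ℝ → ℝ} (hΦ : ContDiff ℝ 3 Φ)
include hΦ

theorem hasDerivAt_of_contDiff_three (t : ℝ) :
    HasDerivAt Φ (deriv Φ t) t ∧ HasDerivAt (deriv Φ) (deriv (deriv Φ) t) t ∧
      HasDerivAt (deriv (deriv Φ)) (deriv (deriv (deriv Φ)) t) t :=
  ⟨(hΦ.differentiable (by norm_num) t).hasDerivAt,
    (hΦ.deriv' (n := 2)).differentiable (by norm_num) t |>.hasDerivAt,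
    (hΦ.deriv' (n := 2)).deriv' (n := 1) |>.differentiable (by norm_num) t |>.hasDerivAt⟩

theorem continuous_deriv_deriv_deriv_of_contDiff_three :
    Continuous (deriv (deriv (deriv Φ))) :=
  ((hΦ.deriv' (n := 2)).deriv' (n := 1)).continuous_deriv le_rfl

theorem integral_const_sub_mul_third_deriv (a b : ℝ) :
    ∫ t in a..b, (b - t) * deriv (deriv (deriv Φ)) t
      = deriv Φ b - deriv Φ a - (b - a) * deriv (deriv Φ) a := by
  have hcont := continuous_deriv_deriv_deriv_of_contDiff_three hΦ
  rw [integral_eq_sub_of_hasDerivAt (f := fun t => (b - t) * deriv (deriv Φ) t + deriv Φ t)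
    (fun t _ => ?_) ((by fun_prop : Continuous _).intervalIntegrable _ _)]
  · ring
  obtain ⟨-, h2, h3⟩ := hasDerivAt_of_contDiff_three hΦ t
  exact (((hasDerivAt_id t).const_sub b).mul h3).add h2 |>.congr_deriv (by simp)

theorem integral_sub_const_mul_third_deriv (a b : ℝ) :
    ∫ t in a..b, (t - a) * deriv (deriv (deriv Φ)) t
      = deriv Φ a - deriv Φ b - (a - b) * deriv (deriv Φ) b := by
  have hcont := continuous_deriv_deriv_deriv_of_contDiff_three hΦ
  rw [integral_eq_sub_of_hasDerivAt (f := fun t => (t - a) * deriv (deriv Φ) t - deriv Φ t)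
    (fun t _ => ?_) ((by fun_prop : Continuous _).intervalIntegrable _ _)]
  · ring
  obtain ⟨-, h2, h3⟩ := hasDerivAt_of_contDiff_three hΦ t
  exact (((hasDerivAt_id t).sub_const a).mul h3).sub h2 |>.congr_deriv (by simp)

theorem two_mul_consJ_eq_integral (a b : ℝ) :
    2 * consJ Φ a b = ∫ t in a..b, (t - a) * (b - t) * deriv (deriv (deriv Φ)) t := by
  have hcont := continuous_deriv_deriv_deriv_of_contDiff_three hΦ
  rw [integral_eq_sub_of_hasDerivAt (f := fun t => (t - a) * (b - t) * deriv (deriv Φ) t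
      + (2 * t - a - b) * deriv Φ t - 2 * Φ t)
    (fun t _ => ?_) ((by fun_prop : Continuous _).intervalIntegrable _ _)]
  · simp only [consJ]; ring
  obtain ⟨h1, h2, h3⟩ := hasDerivAt_of_contDiff_three hΦ t
  have hid := hasDerivAt_id t
  exact ((((hid.sub_const a).mul (hid.const_sub b)).mul h3).add
    (((hid.const_mul 2).sub_const a |>.sub_const b).mul h2) |>.sub (h1.const_mul 2)).congr_deriv
    (by simp; ring)

theorem hasDerivAt_consJ_left (a b : ℝ) :
    HasDerivAt (fun a => consJ Φ a b)
      (-(∫ t in a..b, (b - t) * deriv (deriv (deriv Φ)) t) / 2) a := by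
  obtain ⟨h1, h2, -⟩ := hasDerivAt_of_contDiff_three hΦ a
  rw [integral_const_sub_mul_third_deriv hΦ]
  exact ((h1.sub_const _).sub
    (((hasDerivAt_id a).sub_const b).div_const 2 |>.mul (h2.add_const _))).congr_deriv
      (by simp; ring)

theorem hasDerivAt_consJ_right_s6 (a b : ℝ) :
    HasDerivAt (consJ Φ a) ((∫ t in a..b, (t - a) * deriv (deriv (deriv Φ)) t) / 2) b := by
  obtain ⟨h1, h2, -⟩ := hasDerivAt_of_contDiff_three hΦ b
  rw [integral_sub_const_mul_third_deriv hΦ]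
  exact ((h1.const_sub _).sub
    (((hasDerivAt_id b).const_sub a).div_const 2 |>.mul (h2.const_add _))).congr_deriv
      (by simp; ring)

end Taylor

theorem consJ_swap (Φ : ℝ → ℝ) (a b : ℝ) : consJ Φ b a = -consJ Φ a b := by
  simp only [consJ]; ring

theorem consJ_neg (Φ : ℝ → ℝ) (a b : ℝ) : consJ (fun t => -Φ t) a b = -consJ Φ a b := by
  simp only [consJ, deriv.fun_neg]; ring

theorem integral_pos_of_pos_of_ne {f : ℝ → ℝ} (hf : Continuous f) {x c y : ℝ} (hxc : x < c)
    (hcy : c < y) (hpos : ∀ t ∈ Ioo x y, t ≠ c → 0 < f t) : 0 < ∫ t in x..y, f t := by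
  rw [← integral_add_adjacent_intervals (hf.intervalIntegrable x c) (hf.intervalIntegrable c y)]
  exact add_pos
    (intervalIntegral_pos_of_pos_on (hf.intervalIntegrable x c)
      (fun t ht => hpos t ⟨ht.1, ht.2.trans hcy⟩ ht.2.ne) hxc)
    (intervalIntegral_pos_of_pos_on (hf.intervalIntegrable c y)
      (fun t ht => hpos t ⟨hxc.trans ht.1, ht.2⟩ ht.1.ne') hcy)

theorem sub_mul_pos_of_pos_of_neg {g : ℝ → ℝ} {I : Set ℝ} {rs : ℝ}
    (hpos : ∀ r ∈ I, r < rs → 0 < g r) (hneg : ∀ r ∈ I, rs < r → g r < 0) :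
    ∀ r ∈ I, r ≠ rs → 0 < (rs - r) * g r := fun r hr hne =>
  hne.lt_or_gt.elim (fun h => mul_pos (sub_pos.mpr h) (hpos r hr h))
    (fun h => mul_pos_of_neg_of_neg (sub_neg.mpr h) (hneg r hr h))

section Turning

variable {Φ : ℝ → ℝ} (hΦ : ContDiff ℝ 3 Φ) {I : Set ℝ} (hI : I.OrdConnected) {rs : ℝ}
  (hturn : ∀ r ∈ I, r ≠ rs → 0 < (rs - r) * deriv (deriv (deriv Φ)) r)
include hΦ hI hturn

theorem lt_and_lt_of_consJ_eq_zero {x y : ℝ} (hx : x ∈ I) (hy : y ∈ I) (hxy : x < y)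
    (hJ : consJ Φ x y = 0) : x < rs ∧ rs < y := by
  have hcont := continuous_deriv_deriv_deriv_of_contDiff_three hΦ
  have hzero : ∫ t in x..y, (t - x) * (y - t) * deriv (deriv (deriv Φ)) t = 0 := by
    rw [← two_mul_consJ_eq_integral hΦ, hJ, mul_zero]
  have hw {t : ℝ} (ht : t ∈ Ioo x y) : 0 < (t - x) * (y - t) :=
    mul_pos (sub_pos.mpr ht.1) (sub_pos.mpr ht.2)
  have hI' {t : ℝ} (ht : t ∈ Ioo x y) : t ∈ I := hI.out hx hy (Ioo_subset_Icc_self ht)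
  constructor
  · by_contra! hrx
    have := intervalIntegral_pos_of_pos_on
      (f := fun t => -((t - x) * (y - t) * deriv (deriv (deriv Φ)) t))
      ((by fun_prop : Continuous _).intervalIntegrable _ _) (fun t ht => ?_) hxy
    · rw [integral_neg, hzero, neg_zero] at this
      exact this.false
    · have hg :=
        neg_of_mul_pos_right (hturn t (hI' ht) (hrx.trans_lt ht.1).ne') (by linarith [ht.1])
      exact neg_pos.mpr (mul_neg_of_pos_of_neg (hw ht) hg)
  · by_contra! hyr
    have := intervalIntegral_pos_of_pos_on
      (f := fun t => (t - x) * (y - t) * deriv (deriv (deriv Φ)) t)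
      ((by fun_prop : Continuous _).intervalIntegrable _ _) (fun t ht => ?_) hxy
    · rw [hzero] at this
      exact this.false
    · have hg :=
        pos_of_mul_pos_right (hturn t (hI' ht) (ht.2.trans_le hyr).ne) (by linarith [ht.2])
      exact mul_pos (hw ht) hg

theorem integral_const_sub_mul_third_deriv_pos {x y : ℝ} (hx : x ∈ I) (hy : y ∈ I)
    (hxr : x < rs) (hry : rs < y) (hJ : consJ Φ x y = 0) :
    0 < ∫ t in x..y, (y - t) * deriv (deriv (deriv Φ)) t := by
  have hcont := continuous_deriv_deriv_deriv_of_contDiff_three hΦ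
  have hsplit : (rs - x) * ∫ t in x..y, (y - t) * deriv (deriv (deriv Φ)) t
      = ∫ t in x..y, (y - t) * ((rs - t) * deriv (deriv (deriv Φ)) t) := by
    calc _ = ∫ t in x..y, ((t - x) * (y - t) * deriv (deriv (deriv Φ)) t
              + (y - t) * ((rs - t) * deriv (deriv (deriv Φ)) t)) := by
            rw [← integral_const_mul]; exact integral_congr fun t _ => by ring
      _ = 2 * consJ Φ x y + ∫ t in x..y, (y - t) * ((rs - t) * deriv (deriv (deriv Φ)) t) := by
            rw [integral_add ((by fun_prop : Continuous _).intervalIntegrable _ _)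
              ((by fun_prop : Continuous _).intervalIntegrable _ _), two_mul_consJ_eq_integral hΦ]
      _ = _ := by rw [hJ, mul_zero, zero_add]
  refine pos_of_mul_pos_right (hsplit ▸ integral_pos_of_pos_of_ne (by fun_prop) hxr hry
    fun t ht hne =>
      mul_pos (sub_pos.mpr ht.2) (hturn t (hI.out hx hy (Ioo_subset_Icc_self ht)) hne))
    (sub_pos.mpr hxr).le

theorem integral_sub_const_mul_third_deriv_neg {x y : ℝ} (hx : x ∈ I) (hy : y ∈ I)
    (hxr : x < rs) (hry : rs < y) (hJ : consJ Φ x y = 0) :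
    ∫ t in x..y, (t - x) * deriv (deriv (deriv Φ)) t < 0 := by
  have hcont := continuous_deriv_deriv_deriv_of_contDiff_three hΦ
  have hsplit : (y - rs) * ∫ t in x..y, (t - x) * deriv (deriv (deriv Φ)) t
      = -∫ t in x..y, (t - x) * ((rs - t) * deriv (deriv (deriv Φ)) t) := by
    calc _ = ∫ t in x..y, ((t - x) * (y - t) * deriv (deriv (deriv Φ)) t
              - (t - x) * ((rs - t) * deriv (deriv (deriv Φ)) t)) := by
            rw [← integral_const_mul]; exact integral_congr fun t _ => by ring
      _ = 2 * consJ Φ x y - ∫ t in x..y, (t - x) * ((rs - t) * deriv (deriv (deriv Φ)) t) := by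
            rw [integral_sub ((by fun_prop : Continuous _).intervalIntegrable _ _)
              ((by fun_prop : Continuous _).intervalIntegrable _ _), two_mul_consJ_eq_integral hΦ]
      _ = _ := by rw [hJ, mul_zero, zero_sub]
  have hpos := integral_pos_of_pos_of_ne (by fun_prop) hxr hry
    fun t ht hne =>
      mul_pos (sub_pos.mpr ht.1) (hturn t (hI.out hx hy (Ioo_subset_Icc_self ht)) hne)
  exact neg_of_mul_neg_right (hsplit ▸ neg_neg_of_pos hpos) (sub_pos.mpr hry).le

theorem consJ_pos_of_lt_of_consJ_eq_zero {x x' y : ℝ} (hx : x ∈ I) (hx' : x' ∈ I) (hy : y ∈ I)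
    (hxx' : x < x') (hx'r : x' < rs) (hry : rs < y) (hJ : consJ Φ x' y = 0) :
    0 < consJ Φ x y := by
  have hI' {t : ℝ} (ht : t ∈ Icc x x') : t ∈ I := hI.out hx hx' ht
  refine pos_of_lt_of_hasDerivAt_neg_at_zeros (f := (consJ Φ · y)) hxx'
    (fun t _ => hasDerivAt_consJ_left hΦ t y) (fun t ht hJt => ?_) hJ
  linarith [integral_const_sub_mul_third_deriv_pos hΦ hI hturn (hI' ht) hy (ht.2.trans_lt hx'r)
    hry hJt]

theorem consJ_neg_of_lt_of_consJ_eq_zero {x y y' : ℝ} (hx : x ∈ I) (hy : y ∈ I) (hy' : y' ∈ I)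
    (hxr : x < rs) (hry : rs < y) (hyy' : y < y') (hJ : consJ Φ x y = 0) :
    consJ Φ x y' < 0 := by
  have hI' {t : ℝ} (ht : t ∈ Icc y y') : t ∈ I := hI.out hy hy' ht
  refine neg_of_lt_of_hasDerivAt_neg_at_zeros hyy' (fun t _ => hasDerivAt_consJ_right_s6 hΦ x t)
    (fun t ht hJt => ?_) hJ
  linarith [integral_sub_const_mul_third_deriv_neg hΦ hI hturn hx (hI' ht) hxr
    (hry.trans_le ht.1) hJt]

theorem eq_and_eq_of_le_of_le_of_consJ_eq_zero {x x' y y' : ℝ} (hx : x ∈ I) (hx' : x' ∈ I)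
    (hy : y ∈ I) (hy' : y' ∈ I) (hx'r : x' < rs) (hry : rs < y) (hxx' : x ≤ x') (hyy' : y ≤ y')
    (hJ : consJ Φ x y = 0) (hJ' : consJ Φ x' y' = 0) : x = x' ∧ y = y' := by
  have hxr := hxx'.trans_lt hx'r
  have hry' := hry.trans_le hyy'
  rcases hxx'.lt_or_eq with hlt | rfl
  · have hpos := consJ_pos_of_lt_of_consJ_eq_zero hΦ hI hturn hx hx' hy' hlt hx'r hry' hJ'
    rcases hyy'.lt_or_eq with hlt' | rfl
    · linarith [consJ_neg_of_lt_of_consJ_eq_zero hΦ hI hturn hx hy hy' hxr hry hlt' hJ]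
    · linarith
  · refine ⟨rfl, hyy'.eq_of_not_lt fun hlt => ?_⟩
    linarith [consJ_neg_of_lt_of_consJ_eq_zero hΦ hI hturn hx hy hy' hxr hry hlt hJ]

theorem gt_of_consJ_eq_zero_of_lt {a b a' b' : ℝ} (ha : a ∈ I) (hb : b ∈ I) (ha' : a' ∈ I)
    (hb' : b' ∈ I) (hab : a ≠ b) (hab' : a' ≠ b') (hJ : consJ Φ a b = 0)
    (hJ' : consJ Φ a' b' = 0) (haa' : a < a') : b' < b := by
  have hstraddle {u v : ℝ} (hu : u ∈ I) (hv : v ∈ I) (huv : u ≠ v) (hJuv : consJ Φ u v = 0) :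
      (u < rs ∧ rs < v) ∨ (v < rs ∧ rs < u) :=
    huv.lt_or_gt.imp (lt_and_lt_of_consJ_eq_zero hΦ hI hturn hu hv · hJuv)
      (lt_and_lt_of_consJ_eq_zero hΦ hI hturn hv hu · (by rw [consJ_swap, hJuv, neg_zero]))
  by_contra! hbb'
  rcases hstraddle ha hb hab hJ with ⟨har, hrb⟩ | ⟨hbr, hra⟩ <;>
    rcases hstraddle ha' hb' hab' hJ' with ⟨ha'r, hrb'⟩ | ⟨hb'r, hra'⟩
  · exact haa'.ne (eq_and_eq_of_le_of_le_of_consJ_eq_zero hΦ hI hturn ha ha' hb hb' ha'r hrb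
      haa'.le hbb' hJ hJ').1
  · linarith
  · linarith
  · exact haa'.ne (eq_and_eq_of_le_of_le_of_consJ_eq_zero hΦ hI hturn hb hb' ha ha' hb'r hra
      hbb' haa'.le (by rw [consJ_swap, hJ, neg_zero]) (by rw [consJ_swap, hJ', neg_zero])).2

end Turning

theorem stmt6_general (Φ : ℝ → ℝ) (hΦ : ContDiff ℝ 3 Φ)
    (I : Set ℝ) (hI : I.OrdConnected) (rs : ℝ)
    (hturn :
      ((∀ r ∈ I, r < rs → 0 < iteratedDeriv 3 Φ r) ∧
       (∀ r ∈ I, rs < r → iteratedDeriv 3 Φ r < 0)) ∨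
      ((∀ r ∈ I, r < rs → iteratedDeriv 3 Φ r < 0) ∧
       (∀ r ∈ I, rs < r → 0 < iteratedDeriv 3 Φ r)))
    (a b a' b' : ℝ) (ha : a ∈ I) (hb : b ∈ I) (ha' : a' ∈ I) (hb' : b' ∈ I)
    (hab : a ≠ b) (hab' : a' ≠ b')
    (hJ : consJ Φ a b = 0) (hJ' : consJ Φ a' b' = 0)
    (haa' : a < a') :
    b > b' := by
  have hd3 (Ψ : ℝ → ℝ) : iteratedDeriv 3 Ψ = deriv (deriv (deriv Ψ)) := iteratedDeriv_eq_iterate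
  rcases hturn with ⟨hpos, hneg⟩ | ⟨hneg, hpos⟩
  · exact gt_of_consJ_eq_zero_of_lt hΦ hI
      (sub_mul_pos_of_pos_of_neg (hd3 Φ ▸ hpos) (hd3 Φ ▸ hneg)) ha hb ha' hb' hab hab' hJ hJ' haa'
  · have hd3' (r : ℝ) : deriv (deriv (deriv fun t => -Φ t)) r = -iteratedDeriv 3 Φ r := by
      rw [← hd3, iteratedDeriv_fun_neg]
    refine gt_of_consJ_eq_zero_of_lt hΦ.neg hI
      (sub_mul_pos_of_pos_of_neg (rs := rs) (fun r hr h => ?_) (fun r hr h => ?_))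
      ha hb ha' hb' hab hab' ?_ ?_ haa'
    · exact hd3' r ▸ neg_pos.mpr (hneg r hr h)
    · exact hd3' r ▸ neg_neg_of_pos (hpos r hr h)
    all_goals rw [consJ_neg, neg_eq_zero]; assumption

theorem stmt6 (Φ : ℝ → ℝ) (hΦ : ContDiff ℝ 3 Φ)
    (I : Set ℝ) (hI : I.OrdConnected) (rs : ℝ) (hrs : rs ∈ I)
    (hturn :
      ((∀ r ∈ I, r < rs → 0 < iteratedDeriv 3 Φ r) ∧
       (∀ r ∈ I, rs < r → iteratedDeriv 3 Φ r < 0)) ∨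
      ((∀ r ∈ I, r < rs → iteratedDeriv 3 Φ r < 0) ∧
       (∀ r ∈ I, rs < r → 0 < iteratedDeriv 3 Φ r)))
    (a b a' b' : ℝ) (ha : a ∈ I) (hb : b ∈ I) (ha' : a' ∈ I) (hb' : b' ∈ I)
    (hab : a ≠ b) (hab' : a' ≠ b')
    (hJ : consJ Φ a b = 0) (hJ' : consJ Φ a' b' = 0)
    (haa' : a < a') :
    b > b' :=
  stmt6_general Φ hΦ I hI rs hturn a b a' b' ha hb ha' hb' hab hab' hJ hJ' haa'
end

section
/- Let Φ : ℝ → ℝ be twice continuously differentiable and let (a,b) with a ≠ b satisfy J(a,b) = 0 and σ(a,b) ≠ Φ''(b). Then there exist ε > 0 and a differentiable function R : (a − ε, a + ε) → ℝ with R(a) = b, J(r, R(r)) = 0 for all r ∈ (a − ε, a + ε), and derivative R'(a) = −(σ(a,b) − Φ''(a))/(σ(a,b) − Φ''(b)). In particular R'(a) = 0 if and only if σ(a,b) = Φ''(a). -/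
/-- Rankine–Hugoniot (secant) slope `σ(a,b) = (Φ'(a) − Φ'(b))/(a − b)`. -/
noncomputable def rhSlope (Φ : ℝ → ℝ) (a b : ℝ) : ℝ :=
  (deriv Φ a - deriv Φ b) / (a - b)

/-! Both partial derivatives of `J` at `(x, y)` have the form `(x - y)/2 · (σ(x, y) − Φ''(z))`,
for `z = x` and `z = y` respectively. The hypothesis `σ(a, b) ≠ Φ''(b)` therefore makes `∂J/∂b`
nonzero, and the implicit function theorem solves `J(r, R r) = 0` near `a`; differentiating
this identity gives `R'(a) = −J_a / J_b`, in which the common factor `(a − b)/2` cancels. -/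

open Set ContinuousLinearMap

theorem exists_implicitFunction_of_hasFDerivAt {f : ℝ × ℝ → ℝ} {a b p q : ℝ}
    (hf : ContDiffAt ℝ 1 f (a, b)) (hf' : HasFDerivAt f (p • fst ℝ ℝ ℝ + q • snd ℝ ℝ ℝ) (a, b))
    (hq : q ≠ 0) :
    ∃ ε > 0, ∃ R : ℝ → ℝ, R a = b ∧ DifferentiableOn ℝ R (Ioo (a - ε) (a + ε)) ∧
      (∀ r ∈ Ioo (a - ε) (a + ε), f (r, R r) = f (a, b)) ∧ HasDerivAt R (-(p / q)) a := by
  have hinv : (fderiv ℝ f (a, b) ∘L inr ℝ ℝ ℝ).IsInvertible := by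
    refine .of_inverse (g := q⁻¹ • ContinuousLinearMap.id ℝ ℝ) ?_ ?_ <;>
      ext <;> simp [hf'.fderiv, hq]
  set R := hf.implicitFunction one_ne_zero hinv
  have hRa : R a = b := hf.implicitFunction_apply_self one_ne_zero hinv
  have hRC : ContDiffAt ℝ 1 R a := hf.contDiffAt_implicitFunction one_ne_zero hinv
  have hlevel : ∀ᶠ r in nhds a, f (r, R r) = f (a, b) :=
    hf.eventually_apply_implicitFunction one_ne_zero hinv
  obtain ⟨ε, hε, hball⟩ := Metric.eventually_nhds_iff_ball.mp
    (hlevel.and (hRC.eventually (by simp)))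
  rw [Real.ball_eq_Ioo] at hball
  refine ⟨ε, hε, R, hRa,
    fun r hr => ((hball r hr).2.differentiableAt one_ne_zero).differentiableWithinAt,
    fun r hr => (hball r hr).1, ?_⟩
  have hR' : HasDerivAt R (deriv R a) a := (hRC.differentiableAt one_ne_zero).hasDerivAt
  -- differentiate `r ↦ f (r, R r)`, which is constant near `a`
  have hchain : HasDerivAt (fun r => f (r, R r)) (p + q * deriv R a) a := by
    have hpath : HasDerivAt (fun r => (r, R r)) (1, deriv R a) a := (hasDerivAt_id a).prodMk hR'
    rw [← hRa] at hf'
    refine (hf'.comp_hasDerivAt a hpath).congr_deriv ?_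
    simp
  have hzero : p + q * deriv R a = 0 :=
    hchain.unique ((hasDerivAt_const a (f (a, b))).congr_of_eventuallyEq hlevel)
  convert hR' using 1
  field_simp
  linarith

-- Also true for `x = y`, where both sides vanish (`rhSlope Φ x x` is the junk value `0`).
theorem sub_div_two_mul_rhSlope_sub (Φ : ℝ → ℝ) (x y c : ℝ) :
    (x - y) / 2 * (rhSlope Φ x y - c) = (deriv Φ x - deriv Φ y) / 2 - (x - y) / 2 * c := by
  rcases eq_or_ne x y with rfl | hxy
  · simp
  · rw [rhSlope]
    field_simp [sub_ne_zero.mpr hxy]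

theorem hasFDerivAt_uncurry_consJ {Φ : ℝ → ℝ} (hΦ : Differentiable ℝ Φ)
    (hΦ' : Differentiable ℝ (deriv Φ)) (x y : ℝ) :
    HasFDerivAt (fun v : ℝ × ℝ => consJ Φ v.1 v.2)
      (((x - y) / 2 * (rhSlope Φ x y - deriv (deriv Φ) x)) • fst ℝ ℝ ℝ +
        ((x - y) / 2 * (rhSlope Φ x y - deriv (deriv Φ) y)) • snd ℝ ℝ ℝ) (x, y) := by
  have h₁ := (hΦ x).hasDerivAt.comp_hasFDerivAt (x, y) (hasFDerivAt_fst (𝕜 := ℝ) (F := ℝ))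
  have h₂ := (hΦ y).hasDerivAt.comp_hasFDerivAt (x, y) (hasFDerivAt_snd (𝕜 := ℝ) (E := ℝ))
  have h₁' := (hΦ' x).hasDerivAt.comp_hasFDerivAt (x, y) (hasFDerivAt_fst (𝕜 := ℝ) (F := ℝ))
  have h₂' := (hΦ' y).hasDerivAt.comp_hasFDerivAt (x, y) (hasFDerivAt_snd (𝕜 := ℝ) (E := ℝ))
  have hhalf : HasFDerivAt (fun v : ℝ × ℝ => (v.1 - v.2) / 2)
      ((2 : ℝ)⁻¹ • (fst ℝ ℝ ℝ - snd ℝ ℝ ℝ)) (x, y) := by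
    simpa only [div_eq_mul_inv, Pi.sub_apply] using
      (hasFDerivAt_fst.sub hasFDerivAt_snd).mul_const (2⁻¹ : ℝ)
  refine ((h₁.sub h₂).sub (hhalf.mul (h₁'.add h₂'))).congr_fderiv ?_
  ext <;> simp [sub_div_two_mul_rhSlope_sub] <;> ring

theorem contDiff_uncurry_consJ {Φ : ℝ → ℝ} (hΦ : ContDiff ℝ 2 Φ) :
    ContDiff ℝ 1 (fun v : ℝ × ℝ => consJ Φ v.1 v.2) := by
  have hΦ₁ : ContDiff ℝ 1 Φ := hΦ.of_le one_le_two
  have hΦ' : ContDiff ℝ 1 (deriv Φ) := hΦ.iterate_deriv' 1 1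
  unfold consJ
  fun_prop

theorem stmt9 (Φ : ℝ → ℝ) (hΦ : ContDiff ℝ 2 Φ) (a b : ℝ) (hab : a ≠ b)
    (hJ : consJ Φ a b = 0)
    (hnd : rhSlope Φ a b ≠ iteratedDeriv 2 Φ b) :
    ∃ ε > 0, ∃ R : ℝ → ℝ, R a = b ∧
      DifferentiableOn ℝ R (Set.Ioo (a - ε) (a + ε)) ∧
      (∀ r ∈ Set.Ioo (a - ε) (a + ε), consJ Φ r (R r) = 0) ∧
      HasDerivAt R
        (-((rhSlope Φ a b - iteratedDeriv 2 Φ a) /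
           (rhSlope Φ a b - iteratedDeriv 2 Φ b))) a := by
  have hΦ₁ : Differentiable ℝ Φ := hΦ.differentiable two_ne_zero
  have hΦ₂ : Differentiable ℝ (deriv Φ) := (hΦ.iterate_deriv' 1 1).differentiable one_ne_zero
  rw [iteratedDeriv_succ, iteratedDeriv_one] at hnd ⊢
  have hhalf : (a - b) / 2 ≠ 0 := div_ne_zero (sub_ne_zero.mpr hab) two_ne_zero
  obtain ⟨ε, hε, R, hRa, hRdiff, hRJ, hR'⟩ :=
    exists_implicitFunction_of_hasFDerivAt (contDiff_uncurry_consJ hΦ).contDiffAt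
      (hasFDerivAt_uncurry_consJ hΦ₁ hΦ₂ a b) (mul_ne_zero hhalf (sub_ne_zero.mpr hnd))
  refine ⟨ε, hε, R, hRa, hRdiff, fun r hr => (hRJ r hr).trans hJ, ?_⟩
  rwa [mul_div_mul_left _ _ hhalf] at hR'
end

section
/- Let Φ : ℝ → ℝ be a quartic polynomial Φ(r) = c₄r⁴ + c₃r³ + c₂r² + c₁r + c₀ with c₄ ≠ 0, and let r* = −c₃/(4c₄) be the unique zero of Φ'''. Then for all real a ≠ b: J(a,b) = 0 if and only if a + b = 2r*. In particular, for quartic potentials (classical FPU chains) all off-diagonal conservative shock data lie on the antidiagonal through the turning point. -/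
/-!
`J(a,b)` is the error of the trapezoidal rule for `∫_b^a Φ'`. For a cubic flux `Φ'` this error is
exactly `-(a-b)³/12 · Φ'''((a+b)/2)`, and `Φ'''` is affine with zero `r*`, so off the diagonal
`J(a,b)` vanishes precisely when the midpoint `(a+b)/2` is `r*`.
-/

lemma hasDerivAt_quartic (c4 c3 c2 c1 c0 r : ℝ) :
    HasDerivAt (fun r => c4 * r ^ 4 + c3 * r ^ 3 + c2 * r ^ 2 + c1 * r + c0)
      (4 * c4 * r ^ 3 + 3 * c3 * r ^ 2 + 2 * c2 * r + c1) r := by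
  have h := (((((hasDerivAt_pow 4 r).const_mul c4).add ((hasDerivAt_pow 3 r).const_mul c3)).add
    ((hasDerivAt_pow 2 r).const_mul c2)).add ((hasDerivAt_id r).const_mul c1)).add_const c0
  exact h.congr_deriv (by norm_num; ring)

lemma consJ_quartic (c4 c3 c2 c1 c0 a b : ℝ) :
    consJ (fun r => c4 * r ^ 4 + c3 * r ^ 3 + c2 * r ^ 2 + c1 * r + c0) a b
      = -(a - b) ^ 3 / 2 * (2 * c4 * (a + b) + c3) := by
  rw [consJ, (hasDerivAt_quartic c4 c3 c2 c1 c0 a).deriv,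
    (hasDerivAt_quartic c4 c3 c2 c1 c0 b).deriv]
  ring

theorem stmt14 (c4 c3 c2 c1 c0 : ℝ) (hc4 : c4 ≠ 0) (Φ : ℝ → ℝ)
    (hΦ : Φ = fun r => c4 * r ^ 4 + c3 * r ^ 3 + c2 * r ^ 2 + c1 * r + c0) :
    ∀ a b : ℝ, a ≠ b → (consJ Φ a b = 0 ↔ a + b = 2 * (-c3 / (4 * c4))) := by
  intro a b hab
  have hcube : -(a - b) ^ 3 / 2 ≠ 0 := by
    simpa [sub_eq_zero] using hab
  rw [hΦ, consJ_quartic, mul_eq_zero, or_iff_right hcube]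
  constructor <;> intro h <;> field_simp at h ⊢ <;> linarith
end
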